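/- Soundness of dup/drop inference: For every unannotated term e of the abstract linear language λ̂_lin, the annotated term infer(e) is well formed in the context fv(e), i.e., (fv(e) : multiset with each free variable of e occurring once) ⊩ infer(e). -/

import Mathlib

/-!
Formalization of the abstract linear language λ̂_lin from "Type Classes for
Lightweight Substructural Types" (Clamp), §4.1.
-/

namespace LamLin

/-- Unannotated terms: variables, abstractions, multiplicative pairs `⊗`, and
additive choices `&`. -/
inductive ETm : Type
| var : String → ETm
| lam : String → ETm → ETm
| tens : ETm → ETm → ETm
| amp : ETm → ETm → ETm
deriving DecidableEq

/-- Annotated terms: additionally `dup Γ ae` and `drop Γ ae`, where `Γ` is a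
multiset of variables. -/
inductive ATm : Type
| var : String → ATm
| lam : String → ATm → ATm
| tens : ATm → ATm → ATm
| amp : ATm → ATm → ATm
| dup : Multiset String → ATm → ATm
| drop : Multiset String → ATm → ATm

/-- Free variables of an unannotated term. -/
def ETm.fv : ETm → Finset String
| .var x => {x}
| .lam x e => e.fv \ {x}
| .tens a b => a.fv ∪ b.fv
| .amp a b => a.fv ∪ b.fv

/-- Free variables of an annotated term; for `dup Γ ae` and `drop Γ ae` this
includes the variables of `Γ` together with the free variables of `ae`. -/
def ATm.fv : ATm → Finset String
| .var x => {x}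
| .lam x a => a.fv \ {x}
| .tens a b => a.fv ∪ b.fv
| .amp a b => a.fv ∪ b.fv
| .dup Γ a => Γ.toFinset ∪ a.fv
| .drop Γ a => Γ.toFinset ∪ a.fv

/-- Well-formedness `Γ ⊩ ae` of an annotated term in a multiset context. -/
inductive WF : Multiset String → ATm → Prop
| var : WF {x} (.var x)
| lam : x ∉ Γ → WF (Γ + {x}) a → WF Γ (.lam x a)
| tens : WF Γ₁ a → WF Γ₂ b → WF (Γ₁ + Γ₂) (.tens a b)
| amp : WF Γ a → WF Γ b → WF Γ (.amp a b)
| dup : WF (Γ₁ + Γ₂ + Γ₂) a → WF (Γ₁ + Γ₂) (.dup Γ₂ a)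
| drop : WF Γ₁ a → WF (Γ₁ + Γ₂) (.drop Γ₂ a)

/-- The dup/drop inference (elaboration) algorithm. -/
def infer : ETm → ATm
| .var x => .var x
| .lam x e =>
    if x ∈ e.fv then .lam x (infer e) else .lam x (.drop {x} (infer e))
| .tens a b => .dup (a.fv ∩ b.fv).val (.tens (infer a) (infer b))
| .amp a b =>
    .amp (.drop (b.fv \ a.fv).val (infer a)) (.drop (a.fv \ b.fv).val (infer b))

/-- Erasure of dup/drop annotations. -/
def erase : ATm → ETm
| .var x => .var x
| .lam x a => .lam x (erase a)
| .tens a b => .tens (erase a) (erase b)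
| .amp a b => .amp (erase a) (erase b)
| .dup _ a => erase a
| .drop _ a => erase a

/-- `Subterm s t`: `s` occurs as a subterm of the annotated term `t`. -/
inductive Subterm : ATm → ATm → Prop
| refl : Subterm a a
| lam : Subterm s a → Subterm s (.lam x a)
| tensL : Subterm s a → Subterm s (.tens a b)
| tensR : Subterm s b → Subterm s (.tens a b)
| ampL : Subterm s a → Subterm s (.amp a b)
| ampR : Subterm s b → Subterm s (.amp a b)
| dup : Subterm s a → Subterm s (.dup Γ a)
| drop : Subterm s a → Subterm s (.drop Γ a)

/-- `WFSub Γ ae Γₛ aeₛ`: there is a derivation of `Γ ⊩ ae` containing the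
judgment `Γₛ ⊩ aeₛ` as a subderivation. -/
inductive WFSub : Multiset String → ATm → Multiset String → ATm → Prop
| refl : WF Γ a → WFSub Γ a Γ a
| lam : x ∉ Γ → WFSub (Γ + {x}) a Γs as → WFSub Γ (.lam x a) Γs as
| tensL : WFSub Γ₁ a Γs as → WF Γ₂ b → WFSub (Γ₁ + Γ₂) (.tens a b) Γs as
| tensR : WF Γ₁ a → WFSub Γ₂ b Γs as → WFSub (Γ₁ + Γ₂) (.tens a b) Γs as
| ampL : WFSub Γ a Γs as → WF Γ b → WFSub Γ (.amp a b) Γs as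
| ampR : WF Γ a → WFSub Γ b Γs as → WFSub Γ (.amp a b) Γs as
| dup : WFSub (Γ₁ + Γ₂ + Γ₂) a Γs as → WFSub (Γ₁ + Γ₂) (.dup Γ₂ a) Γs as
| drop : WFSub Γ₁ a Γs as → WFSub (Γ₁ + Γ₂) (.drop Γ₂ a) Γs as

end LamLin

/-!
Structural induction on `e`. The only work is multiset bookkeeping for the context: at `e₁ ⊗ e₂`
the free variables shared by both sides are counted twice in `fv e₁ + fv e₂`, which is exactly what
`dup (fv e₁ ∩ fv e₂)` provides, and at `e₁ & e₂` each branch is padded by `drop` to the common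
context `fv e₁ ∪ fv e₂`.
-/

namespace Finset

variable {α : Type*} [DecidableEq α]

theorem val_add_val_sdiff (s t : Finset α) : s.val + (t \ s).val = (s ∪ t).val := by
  rw [union_val, sdiff_val, Multiset.union_comm, Multiset.union_def, add_comm]

theorem val_union_add_val_inter (s t : Finset α) : (s ∪ t).val + (s ∩ t).val = s.val + t.val := by
  rw [union_val, inter_val, Multiset.union_add_inter]

theorem val_sdiff_singleton_add {x : α} {s : Finset α} (hx : x ∈ s) :
    (s \ {x}).val + {x} = s.val := by
  rw [sdiff_val, singleton_val, tsub_add_cancel_of_le (Multiset.singleton_le.mpr hx)]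

end Finset

namespace LamLin

theorem WF.dup_of_le {Γ Δ : Multiset String} {a : ATm} (hΔ : Δ ≤ Γ) (ha : WF (Γ + Δ) a) :
    WF Γ (.dup Δ a) := by
  rw [← tsub_add_cancel_of_le hΔ] at ha ⊢
  exact WF.dup ha

/-- **Soundness of dup/drop inference** (Lemma 7 of the Clamp paper).
For every unannotated term `e`, the annotated term `infer(e)` is well formed
in the context `fv(e)` (the multiset with each free variable of `e`
occurring once). -/
theorem infer_sound (e : ETm) : WF e.fv.val (infer e) := by
  induction e with
  | var x => exact WF.var
  | lam x e ih =>
    by_cases hx : x ∈ e.fv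
    · rw [infer, if_pos hx, ETm.fv]
      refine WF.lam (Finset.notMem_sdiff_of_mem_right (Finset.mem_singleton_self x)) ?_
      rwa [Finset.val_sdiff_singleton_add hx]
    · rw [infer, if_neg hx, ETm.fv, Finset.sdiff_singleton_eq_erase, Finset.erase_eq_of_notMem hx]
      exact WF.lam hx (WF.drop ih)
  | tens a b iha ihb =>
    rw [ETm.fv]
    refine WF.dup_of_le (Finset.val_le_iff.mpr Finset.inter_subset_union) ?_
    rw [Finset.val_union_add_val_inter]
    exact WF.tens iha ihb
  | amp a b iha ihb =>
    rw [ETm.fv]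
    refine WF.amp ?_ ?_
    · exact Finset.val_add_val_sdiff a.fv b.fv ▸ WF.drop iha
    · exact Finset.union_comm b.fv a.fv ▸ Finset.val_add_val_sdiff b.fv a.fv ▸ WF.drop ihb

end LamLin
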